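/- Let H be a Sidorenko r-graph, let δ ∈ (0,1), n ≥ r and p ∈ (0,1). Set q̂ = (1−δ)^{1/e(H)} p and q = q̂ · n^r / (n(n−1)⋯(n−r+1)), and assume q ≤ p. Then, with A ~ μ_p, − log P( t(H, A) ≤ (1−δ) p^{e(H)} ) ≥ binom(n, r) · I_p(q). -/

import Mathlib

open scoped Classical
open Finset

/-! ### Tensors -/

/-- Order-`r` tensors of size `n`. -/
abbrev Tensor (n r : ℕ) : Type := (Fin r → Fin n) → ℝ

/-- `r`-element subsets of `[n]`. -/
abbrev Idx (n r : ℕ) := {I : Finset (Fin n) // I.card = r}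

/-- Evaluation of a tensor at an `r`-element subset, via the monotone enumeration. -/
noncomputable def setEval {n r : ℕ} (Z : Tensor n r) (I : Idx n r) : ℝ :=
  Z fun k => ((I.1.orderIsoOfFin I.2) k).1

/-- Symmetric Boolean tensors supported on injective tuples (adjacency tensors). -/
def adjSet (n r : ℕ) : Set (Tensor n r) :=
  {A | (∀ (σ : Equiv.Perm (Fin r)) (x : Fin r → Fin n), A (x ∘ σ) = A x) ∧
    (∀ x, A x = 0 ∨ A x = 1) ∧ ∀ x, ¬Function.Injective x → A x = 0}

/-- Symmetric `[0,1]`-valued tensors supported on injective tuples. -/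
def wtSet (n r : ℕ) : Set (Tensor n r) :=
  {Q | (∀ (σ : Equiv.Perm (Fin r)) (x : Fin r → Fin n), Q (x ∘ σ) = Q x) ∧
    (∀ x, 0 ≤ Q x ∧ Q x ≤ 1) ∧ ∀ x, ¬Function.Injective x → Q x = 0}

/-- The tensor equal to `1` whenever all coordinates are distinct and `0` otherwise. -/
noncomputable def Jten (n r : ℕ) : Tensor n r := fun x => if Function.Injective x then 1 else 0

/-! ### Random hypergraphs -/

/-- A selection of hyperedges: a Boolean function on `r`-element subsets of `[n]`. -/
abbrev EdgeSel (n r : ℕ) := Idx n r → Bool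

/-- The adjacency tensor of a hyperedge selection. -/
noncomputable def adjOf {n r : ℕ} (ω : EdgeSel n r) : Tensor n r := fun x =>
  if h : Function.Injective x then
    (if ω ⟨Finset.image x Finset.univ, by
        rw [Finset.card_image_of_injective _ h, Finset.card_univ, Fintype.card_fin]⟩
      then 1 else 0)
  else 0

/-- The product-Bernoulli weight of a hyperedge selection, with success probability `Q(I)`
for the edge `I`. -/
noncomputable def wWeight {n r : ℕ} (Q : Tensor n r) (ω : EdgeSel n r) : ℝ :=
  ∏ I : Idx n r, if ω I then setEval Q I else 1 - setEval Q I

/-- Probability of a set of tensors under the inhomogeneous Erdős–Rényi measure `μ_Q`. -/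
noncomputable def muQ (n r : ℕ) (Q : Tensor n r) (E : Set (Tensor n r)) : ℝ :=
  ∑ ω : EdgeSel n r, if adjOf ω ∈ E then wWeight Q ω else 0

/-- Probability of a set of tensors under the Erdős–Rényi measure `μ_p`. -/
noncomputable def muP (n r : ℕ) (p : ℝ) : Set (Tensor n r) → ℝ := muQ n r fun _ => p

/-- Expectation of a functional of the adjacency tensor under `μ_Q`. -/
noncomputable def expQ (n r : ℕ) (Q : Tensor n r) (f : Tensor n r → ℝ) : ℝ :=
  ∑ ω : EdgeSel n r, wWeight Q ω * f (adjOf ω)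

/-- Variance of a functional of the adjacency tensor under `μ_Q`. -/
noncomputable def varQ (n r : ℕ) (Q : Tensor n r) (f : Tensor n r → ℝ) : ℝ :=
  expQ n r Q fun A => (f A - expQ n r Q f) ^ 2

/-! ### Relative entropy -/

/-- Relative entropy of Bernoulli(x) with respect to Bernoulli(p). -/
noncomputable def entBer (p x : ℝ) : ℝ :=
  x * Real.log (x / p) + (1 - x) * Real.log ((1 - x) / (1 - p))

/-- `I_p(Q)`, the relative entropy of `μ_Q` with respect to `μ_p`. -/
noncomputable def entRate (n r : ℕ) (p : ℝ) (Q : Tensor n r) : ℝ :=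
  ∑ I : Idx n r, entBer p (setEval Q I)

/-! ### Weighted bases and test tensors -/

/-- The data of a weighted base over an `r`-element set (identified with `Fin r` via the
bijection `ι`). -/
structure WBase (r : ℕ) where
  B : Finset (Finset (Fin r))
  dstar : ℕ
  d : Finset (Fin r) → ℕ

/-- The axioms of a weighted base: `∅ ∈ B`, members are proper subsets, nonempty members are
pairwise incomparable, and the weights satisfy `d_b ≤ d_*`, `d_∅ = 0`. -/
def WBase.Valid {r : ℕ} (Bw : WBase r) : Prop :=
  ∅ ∈ Bw.B ∧ (∀ b ∈ Bw.B, b ≠ Finset.univ) ∧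
    (∀ b₁ ∈ Bw.B, ∀ b₂ ∈ Bw.B, b₁.Nonempty → b₂.Nonempty → b₁ ≠ b₂ → ¬b₁ ⊆ b₂) ∧
    (∀ b ∈ Bw.B, Bw.d b ≤ Bw.dstar) ∧ Bw.d ∅ = 0

/-- A system of Boolean factors, one for each subset of coordinates. -/
abbrev Factors (n r : ℕ) := (b : Finset (Fin r)) → ({v : Fin r // v ∈ b} → Fin n) → Bool

/-- The test tensor with factor system `f`: the entrywise product over `b ∈ B` of the Boolean
tensors `t_b ∘ π_b`. -/
noncomputable def testFun {n r : ℕ} (Bw : WBase r) (f : Factors n r) : Tensor n r := fun x =>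
  ∏ b ∈ Bw.B, if f b (fun v => x v.1) then (1 : ℝ) else 0

/-- `‖t_b‖₁`, the number of inputs on which the factor `t_b` equals one. -/
noncomputable def facNorm1 {n r : ℕ} (f : Factors n r) (b : Finset (Fin r)) : ℝ :=
  ((Finset.univ.filter fun y : {v : Fin r // v ∈ b} → Fin n => f b y = true).card : ℝ)

/-- The norm `‖T‖_Bw` of a test tensor, presented by its factor system. -/
noncomputable def testNorm {n r : ℕ} (p : ℝ) (Bw : WBase r) (f : Factors n r) : ℝ :=
  max (∑ x : Fin r → Fin n, |testFun Bw f x|)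
    (⨆ b ∈ Bw.B, (n : ℝ) ^ (r - b.card) * p ^ (Bw.dstar - Bw.d b) * facNorm1 f b)

/-- The dual seminorm `‖Z‖*_Bw = max_{T ∈ T_Bw} |⟨Z,T⟩| / ‖T‖_Bw`. -/
noncomputable def dualNorm {r : ℕ} (n : ℕ) (p : ℝ) (Bw : WBase r) (Z : Tensor n r) : ℝ :=
  ⨆ f : Factors n r,
    if ∃ x, testFun Bw f x ≠ 0 then
      |∑ x : Fin r → Fin n, Z x * testFun Bw f x| / testNorm p Bw f
    else 0

/-- `W_{n,p}(Bw) = min_{b ∈ B} n^{r-|b|} p^{d_* - d_b + 2}`. -/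
noncomputable def Wnp (n : ℕ) {r : ℕ} (p : ℝ) (Bw : WBase r) : ℝ :=
  sInf ((fun b => (n : ℝ) ^ (r - b.card) * p ^ (Bw.dstar - Bw.d b + 2)) '' ↑Bw.B)

/-! ### Families of weighted bases -/

/-- `‖Z‖*_BB = max_e ‖Z‖*_{Bw(e)}` for a finite family of weighted bases. -/
noncomputable def famDual {r m : ℕ} (n : ℕ) (p : ℝ) (BB : Fin m → WBase r)
    (Z : Tensor n r) : ℝ :=
  ⨆ i, dualNorm n p (BB i) Z

/-- `W_{n,p}(BB) = min_e W_{n,p}(Bw(e))` for a finite family of weighted bases. -/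
noncomputable def famW {r m : ℕ} (n : ℕ) (p : ℝ) (BB : Fin m → WBase r) : ℝ :=
  ⨅ i, Wnp n p (BB i)

/-- `U_BB(Q, δ)`, the `δ`-neighborhood of `Q` in `A_{n,r}` under `‖·‖*_BB`. -/
def nbhdFam {r m n : ℕ} (p δ : ℝ) (BB : Fin m → WBase r) (Q : Tensor n r) :
    Set (Tensor n r) :=
  {A | A ∈ adjSet n r ∧ famDual n p BB (fun x => Q x - A x) ≤ δ}

/-- The outer approximation `(E)_{BB,δ} = ⋃_{A ∈ E} conv(U_BB(A,δ))`. -/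
def outerFam {r m n : ℕ} (p δ : ℝ) (BB : Fin m → WBase r) (E : Set (Tensor n r)) :
    Set (Tensor n r) :=
  ⋃ A ∈ E, convexHull ℝ (nbhdFam p δ BB A)

/-- The inner approximation `(E)°_{BB,δ} = {Q ∈ Q_{n,r} : U_BB(Q,δ) ⊆ E}`. -/
def innerFam {r m n : ℕ} (p δ : ℝ) (BB : Fin m → WBase r) (E : Set (Tensor n r)) :
    Set (Tensor n r) :=
  {Q | Q ∈ wtSet n r ∧ nbhdFam p δ BB Q ⊆ E}

/-! ### Hypergraphs -/

/-- An `r`-uniform hypergraph: a finite vertex type and a finite set of `r`-element edges. -/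
structure RGraph (r : ℕ) where
  V : Type
  [fV : Fintype V]
  [dV : DecidableEq V]
  E : Finset (Finset V)
  card_edge : ∀ e ∈ E, e.card = r

attribute [instance] RGraph.fV RGraph.dV

/-- Evaluation `S(φ(e))` of a tensor at the image of an edge (zero if `φ` is not injective
on the edge). -/
noncomputable def edgeEval {n r : ℕ} {V : Type} [DecidableEq V] (Z : Tensor n r)
    (φ : V → Fin n) (e : Finset V) : ℝ :=
  if h : (e.image φ).card = r then setEval Z ⟨e.image φ, h⟩ else 0

/-- Homomorphism count of the subgraph of `H` with edge set `E₀` (on the full vertex set). -/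
noncomputable def homE {n r : ℕ} (H : RGraph r) (E₀ : Finset (Finset H.V))
    (Q : Tensor n r) : ℝ :=
  ∑ φ : H.V → Fin n, ∏ e ∈ E₀, edgeEval Q φ e

/-- `hom(H, Q)`. -/
noncomputable def homR {n r : ℕ} (H : RGraph r) (Q : Tensor n r) : ℝ := homE H H.E Q

/-- `t(H, Q) = hom(H,Q) / n^{v(H)}`. -/
noncomputable def tR {n r : ℕ} (H : RGraph r) (Q : Tensor n r) : ℝ :=
  homR H Q / (n : ℝ) ^ Fintype.card H.V

/-- `t_p(H, Q) = hom(H,Q) / (n^{v(H)} p^{e(H)})`. -/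
noncomputable def tp {n r : ℕ} (H : RGraph r) (p : ℝ) (Q : Tensor n r) : ℝ :=
  homR H Q / ((n : ℝ) ^ Fintype.card H.V * p ^ H.E.card)

/-- Multilinear homomorphism count for a collection of tensors indexed by the edges. -/
noncomputable def homColl {n r : ℕ} (H : RGraph r) (S : {e // e ∈ H.E} → Tensor n r) : ℝ :=
  ∑ φ : H.V → Fin n, ∏ e : {e // e ∈ H.E}, edgeEval (S e) φ e.1

/-- Normalized multilinear homomorphism count. -/
noncomputable def tpColl {n r : ℕ} (H : RGraph r) (p : ℝ)
    (S : {e // e ∈ H.E} → Tensor n r) : ℝ :=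
  homColl H S / ((n : ℝ) ^ Fintype.card H.V * p ^ H.E.card)

/-- Signed multilinear homomorphism count: positive edges contribute `S^e(φ(e))`,
negative edges contribute `1 - S^e(φ(e))`. -/
noncomputable def shomColl {n r : ℕ} (H : RGraph r) (sgn : Finset H.V → Bool)
    (S : {e // e ∈ H.E} → Tensor n r) : ℝ :=
  ∑ φ : H.V → Fin n, ∏ e : {e // e ∈ H.E},
    if sgn e.1 then edgeEval (S e) φ e.1 else 1 - edgeEval (S e) φ e.1

/-- Signed homomorphism count of the subgraph with edge set `E₀`, with a single tensor. -/
noncomputable def shomE {n r : ℕ} (H : RGraph r) (sgn : Finset H.V → Bool)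
    (E₀ : Finset (Finset H.V)) (Q : Tensor n r) : ℝ :=
  ∑ φ : H.V → Fin n, ∏ e ∈ E₀, (if sgn e then edgeEval Q φ e else 1 - edgeEval Q φ e)

/-! ### Degrees -/

/-- Degree of a vertex. -/
def vdeg {r : ℕ} (H : RGraph r) (v : H.V) : ℕ := (H.E.filter fun e => v ∈ e).card

/-- Maximum degree `Δ(H)`. -/
def maxDeg {r : ℕ} (H : RGraph r) : ℕ := Finset.univ.sup fun v => vdeg H v

/-- Maximum degree with respect to a subset of the edges. -/
def maxDegOn {r : ℕ} (H : RGraph r) (E₀ : Finset (Finset H.V)) : ℕ :=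
  Finset.univ.sup fun v : H.V => (E₀.filter fun e => v ∈ e).card

/-- `d^H(U)`: the number of edges `e' ≠ U` meeting `U`. -/
def edeg {V : Type} [DecidableEq V] (E₀ : Finset (Finset V)) (U : Finset V) : ℕ :=
  (E₀.filter fun e' => e' ≠ U ∧ (e' ∩ U).Nonempty).card

/-- `d^H_b(U)`: the number of edges `e'` with `∅ ≠ e' ∩ U ⊆ b`. -/
def edegSub {V : Type} [DecidableEq V] (E₀ : Finset (Finset V)) (b U : Finset V) : ℕ :=
  (E₀.filter fun e' => (e' ∩ U).Nonempty ∧ e' ∩ U ⊆ b).card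

/-! ### Base systems over a hypergraph -/

/-- The data of a base system over `H`: for each edge, an identification of `Fin r` with the
edge and a base of subsets of `Fin r`. -/
structure BaseSystem {r : ℕ} (H : RGraph r) where
  emb : (e : {e // e ∈ H.E}) → Fin r → H.V
  emb_inj : ∀ e, Function.Injective (emb e)
  emb_mem : ∀ e (k : Fin r), emb e k ∈ e.1
  B : (e : {e // e ∈ H.E}) → Finset (Finset (Fin r))

/-- The image in the vertex set of a subset of coordinates. -/
def BaseSystem.vimage {r : ℕ} {H : RGraph r} (S : BaseSystem H) (e : {e // e ∈ H.E})
    (b : Finset (Fin r)) : Finset H.V :=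
  b.image (S.emb e)

/-- Validity plus `H`-domination of a base system: each base satisfies the base axioms and
every overlap `e ∩ e'` is contained in (the image of) some member of the base. -/
def BaseSystem.Good {r : ℕ} {H : RGraph r} (S : BaseSystem H) : Prop :=
  ∀ e : {e // e ∈ H.E},
    ∅ ∈ S.B e ∧ (∀ b ∈ S.B e, b ≠ Finset.univ) ∧
      (∀ b₁ ∈ S.B e, ∀ b₂ ∈ S.B e, b₁.Nonempty → b₂.Nonempty → b₁ ≠ b₂ → ¬b₁ ⊆ b₂) ∧
      (∀ e' ∈ H.E, e' ≠ e.1 → ∃ b ∈ S.B e, e' ∩ e.1 ⊆ S.vimage e b)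

/-- The weighted base at an edge `e`, with weights given by the degree counts of `E₀`
(`d_* = d^{E₀}(e)`, `d_b = d^{E₀}_b(e)`). -/
def BaseSystem.wb {r : ℕ} {H : RGraph r} (S : BaseSystem H) (E₀ : Finset (Finset H.V))
    (e : {e // e ∈ H.E}) : WBase r :=
  { B := S.B e
    dstar := edeg E₀ e.1
    d := fun b => edegSub E₀ (S.vimage e b) e.1 }

/-- The seminorm `‖Z‖*_BB = max_{e ∈ E(H)} ‖Z‖*_{Bw(e)}` of a base system with weights
from `E₀`. -/
noncomputable def bsDualNorm {n r : ℕ} {H : RGraph r} (S : BaseSystem H)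
    (E₀ : Finset (Finset H.V)) (p : ℝ) (Z : Tensor n r) : ℝ :=
  ⨆ e : {e // e ∈ H.E}, dualNorm n p (S.wb E₀ e) Z

/-- `W_{n,p}(BB) = min_{e ∈ E(H)} W_{n,p}(Bw(e))` for a base system. -/
noncomputable def bsW {r : ℕ} {H : RGraph r} (S : BaseSystem H)
    (E₀ : Finset (Finset H.V)) (n : ℕ) (p : ℝ) : ℝ :=
  ⨅ e : {e // e ∈ H.E}, Wnp n p (S.wb E₀ e)

/-! ### Variational problems -/

/-- The upper-tail variational problem `Φ_{n,p}(H, u)`. -/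
noncomputable def Phi {r : ℕ} (H : RGraph r) (n : ℕ) (p u : ℝ) : ℝ :=
  sInf {x : ℝ | ∃ Q ∈ wtSet n r, tR H Q ≥ (1 + u) * p ^ H.E.card ∧ x = entRate n r p Q}

/-- The lower-tail variational problem `Ψ_{n,p}(H, u)`. -/
noncomputable def Psi {r : ℕ} (H : RGraph r) (n : ℕ) (p u : ℝ) : ℝ :=
  sInf {x : ℝ | ∃ Q ∈ wtSet n r, tR H Q ≤ (1 - u) * p ^ H.E.card ∧ x = entRate n r p Q}

/-! ### The parameter Δ'(H) -/

/-- A dominating base for the edge `e` of `H`, as a collection of vertex subsets. -/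
def IsDomBase {r : ℕ} (H : RGraph r) (e : Finset H.V) (B : Finset (Finset H.V)) : Prop :=
  ∅ ∈ B ∧ (∀ b ∈ B, b ⊆ e ∧ b ≠ e) ∧
    (∀ b₁ ∈ B, ∀ b₂ ∈ B, b₁.Nonempty → b₂.Nonempty → b₁ ≠ b₂ → ¬b₁ ⊆ b₂) ∧
    ∀ e' ∈ H.E, e' ≠ e → ∃ b ∈ B, e' ∩ e ⊆ b

/-- `d'_b(e)`. -/
noncomputable def dpb {r : ℕ} (H : RGraph r) (e b : Finset H.V) : ℝ :=
  if b = ∅ then ((edeg H.E e : ℝ) + 2) / (r : ℝ)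
  else ((edeg H.E (e \ b) : ℝ) + 1) / ((e \ b).card : ℝ)

/-- `d'_B(e) = max_{b ∈ B} d'_b(e)`. -/
noncomputable def dpBase {r : ℕ} (H : RGraph r) (e : Finset H.V)
    (B : Finset (Finset H.V)) : ℝ :=
  sSup (dpb H e '' ↑B)

/-- `d'(e)`: minimum over dominating bases. -/
noncomputable def dprime {r : ℕ} (H : RGraph r) (e : Finset H.V) : ℝ :=
  sInf {x : ℝ | ∃ B, IsDomBase H e B ∧ x = dpBase H e B}

/-- `Δ'(H) = max_{e ∈ E(H)} d'(e)`. -/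
noncomputable def DeltaPrime {r : ℕ} (H : RGraph r) : ℝ :=
  sSup (dprime H '' ↑H.E)

/-! ### Cut matrices (the case r = 2) -/

/-- The cut matrix `1_I ⊗ 1_J`, as a 2-tensor. -/
noncomputable def cut2 {n : ℕ} (I J : Finset (Fin n)) : Tensor n 2 := fun x =>
  if x 0 ∈ I ∧ x 1 ∈ J then 1 else 0

/-- `‖1_I ⊗ 1_J‖_{Δ,2} = (|I| ∨ n₀)(|J| ∨ n₀)` with `n₀ = n p^{Δ-1}`. -/
noncomputable def cutNormIJ (n : ℕ) (p : ℝ) (Δ : ℕ) (I J : Finset (Fin n)) : ℝ :=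
  max (I.card : ℝ) ((n : ℝ) * p ^ (Δ - 1)) * max (J.card : ℝ) ((n : ℝ) * p ^ (Δ - 1))

/-- The dual norm `‖M‖*_{Δ,2}`. -/
noncomputable def cutDual (n : ℕ) (p : ℝ) (Δ : ℕ) (M : Tensor n 2) : ℝ :=
  ⨆ I : Finset (Fin n), ⨆ J : Finset (Fin n),
    |∑ x : Fin 2 → Fin n, M x * cut2 I J x| / cutNormIJ n p Δ I J

/-! ### The class S(G) -/

/-- `G' ∈ S(G)`: there is a surjection from `V(G)` onto `V(G')`, injective on each edge,
mapping the edge set of `G` onto that of `G'`. -/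
def InSclass {r : ℕ} (G G' : RGraph r) : Prop :=
  ∃ Ψ : G.V → G'.V, Function.Surjective Ψ ∧ (∀ e ∈ G.E, Set.InjOn Ψ ↑e) ∧
    G'.E = G.E.image fun e => e.image Ψ

/-- The maximum degree of the positive part `H₊` of a signed hypergraph. -/
def posDeg {r : ℕ} (H : RGraph r) (sgn : Finset H.V → Bool) : ℕ :=
  maxDegOn H (H.E.filter fun e => sgn e = true)

/-! By Sidorenko's property, every `A` in the lower-tail event satisfies
`t(K_r^r, A)^{e(H)} ≤ t(H, A) ≤ (1 - δ) p^{e(H)}`, hence has at most `q · binom(n, r)` edges.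
The number of edges of `A ~ μ_p` is binomial, and comparing `μ_p` with `μ_q` pointwise on
configurations with at most `q · binom(n, r)` edges gives the Chernoff bound
`exp(-binom(n, r) I_p(q))`. The event contains the empty hypergraph, so its probability is
positive and the logarithm is not the junk value `log 0 = 0`. -/

def edgeCount {n r : ℕ} (ω : EdgeSel n r) : ℕ := #{I | ω I}

section ProductMeasure

variable {n r : ℕ}

lemma sum_wWeight (Q : Tensor n r) : ∑ ω : EdgeSel n r, wWeight Q ω = 1 := by
  have h := Fintype.prod_sum fun (I : Idx n r) (b : Bool) =>
    if b then setEval Q I else 1 - setEval Q I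
  simp only [Fintype.sum_bool, if_true, Bool.false_eq_true, if_false, add_sub_cancel,
    prod_const_one] at h
  exact h.symm

lemma wWeight_const (c : ℝ) (ω : EdgeSel n r) :
    wWeight (fun _ => c) ω =
      c ^ edgeCount ω * (1 - c) ^ (Fintype.card (Idx n r) - edgeCount ω) := by
  simp only [wWeight, setEval]
  rw [prod_ite, prod_const, prod_const, filter_not,
    card_sdiff_of_subset (filter_subset _ _), card_univ]
  rfl

lemma wWeight_const_nonneg {c : ℝ} (hc₀ : 0 ≤ c) (hc₁ : c ≤ 1) (ω : EdgeSel n r) :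
    0 ≤ wWeight (fun _ => c) ω := by
  rw [wWeight_const]
  exact mul_nonneg (pow_nonneg hc₀ _) (pow_nonneg (sub_nonneg.2 hc₁) _)

end ProductMeasure

section Adjacency

variable {n r : ℕ} (ω : EdgeSel n r)

lemma adjOf_of_injective {x : Fin r → Fin n} (hx : Function.Injective x) (I : Idx n r)
    (hI : I.1 = univ.image x) : adjOf ω x = if ω I then 1 else 0 := by
  obtain ⟨I, hIcard⟩ := I
  subst hI
  simp [adjOf, hx]

lemma adjOf_of_not_injective {x : Fin r → Fin n} (hx : ¬Function.Injective x) :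
    adjOf ω x = 0 := by
  simp [adjOf, hx]

lemma adjOf_comp_perm (σ : Equiv.Perm (Fin r)) (x : Fin r → Fin n) :
    adjOf ω (x ∘ σ) = adjOf ω x := by
  by_cases hx : Function.Injective x
  · have himage : univ.image (x ∘ σ) = univ.image x := by
      rw [← image_image, image_univ_equiv]
    have hcard : (univ.image x).card = r := by
      rw [card_image_of_injective _ hx, card_univ, Fintype.card_fin]
    rw [adjOf_of_injective ω ((EquivLike.injective_comp σ x).2 hx) ⟨_, hcard⟩ himage.symm,
      adjOf_of_injective ω hx ⟨_, hcard⟩ rfl]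
  · rw [adjOf_of_not_injective ω hx,
      adjOf_of_not_injective ω (mt (EquivLike.injective_comp σ x).1 hx)]

lemma adjOf_mem_wtSet : adjOf ω ∈ wtSet n r := by
  refine ⟨fun σ x => adjOf_comp_perm ω σ x, fun x => ?_, fun x => adjOf_of_not_injective ω⟩
  unfold adjOf
  split_ifs <;> norm_num

lemma adjOf_nonneg (x : Fin r → Fin n) : 0 ≤ adjOf ω x :=
  ((adjOf_mem_wtSet ω).2.1 x).1

lemma adjOf_false : adjOf (fun _ : Idx n r => false) = 0 := by
  funext x
  simp [adjOf]

/-- Each selected edge `I` is seen by the `r!` injective tuples `I.orderEmbOfFin ∘ σ`. -/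
lemma factorial_mul_edgeCount_le_sum_adjOf :
    (r.factorial : ℝ) * edgeCount ω ≤ ∑ x : Fin r → Fin n, adjOf ω x := by
  set F : Idx n r × Equiv.Perm (Fin r) → Fin r → Fin n :=
    fun Iσ => Iσ.1.1.orderEmbOfFin Iσ.1.2 ∘ Iσ.2
  have hF_apply_injective : ∀ Iσ, Function.Injective (F Iσ) := fun Iσ =>
    (Iσ.1.1.orderEmbOfFin Iσ.1.2).injective.comp Iσ.2.injective
  have hF_image : ∀ Iσ, univ.image (F Iσ) = Iσ.1.1 := fun Iσ => by
    rw [← image_image, image_univ_equiv, image_orderEmbOfFin_univ]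
  have hF_injective : Function.Injective F := by
    rintro ⟨I, σ⟩ ⟨J, τ⟩ hIJ
    obtain rfl : I = J := Subtype.ext <| by rw [← hF_image (I, σ), ← hF_image (J, τ), hIJ]
    obtain rfl : σ = τ := Equiv.ext fun k =>
      (I.1.orderEmbOfFin I.2).injective (congrFun hIJ k)
    rfl
  calc (r.factorial : ℝ) * edgeCount ω
      = ∑ I : Idx n r, if ω I then (r.factorial : ℝ) else 0 := by
        rw [sum_ite, sum_const_zero, add_zero, sum_const, nsmul_eq_mul, mul_comm]
        rfl
    _ = ∑ Iσ : Idx n r × Equiv.Perm (Fin r), if ω Iσ.1 then (1 : ℝ) else 0 := by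
        rw [Fintype.sum_prod_type]
        refine sum_congr rfl fun I _ => ?_
        split_ifs <;> simp [Fintype.card_perm]
    _ = ∑ Iσ : Idx n r × Equiv.Perm (Fin r), adjOf ω (F Iσ) :=
        sum_congr rfl fun Iσ _ =>
          (adjOf_of_injective ω (hF_apply_injective Iσ) Iσ.1 (hF_image Iσ).symm).symm
    _ = ∑ x ∈ univ.image F, adjOf ω x := (sum_image fun _ _ _ _ h => hF_injective h).symm
    _ ≤ ∑ x : Fin r → Fin n, adjOf ω x :=
        sum_le_sum_of_subset_of_nonneg (subset_univ _) fun x _ _ => adjOf_nonneg ω x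

lemma edgeCount_le_of_density_le (hn : r ≤ n) {s : ℝ}
    (hs : (∑ x : Fin r → Fin n, adjOf ω x) / (n : ℝ) ^ r ≤ s) :
    (edgeCount ω : ℝ) ≤ s * (n : ℝ) ^ r / n.descFactorial r * n.choose r := by
  have hn₀ : (0 : ℝ) < (n : ℝ) ^ r := by
    exact_mod_cast (Nat.descFactorial_pos.2 hn).trans_le (Nat.descFactorial_le_pow n r)
  have hfac : (0 : ℝ) < r.factorial := by exact_mod_cast r.factorial_pos
  have hchoose : (0 : ℝ) < n.choose r := by exact_mod_cast Nat.choose_pos hn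
  have hdesc : (n.descFactorial r : ℝ) = r.factorial * n.choose r := by
    exact_mod_cast Nat.descFactorial_eq_factorial_mul_choose n r
  rw [div_le_iff₀ hn₀] at hs
  rw [hdesc, div_mul_eq_mul_div, le_div_iff₀ (by positivity)]
  nlinarith [factorial_mul_edgeCount_le_sum_adjOf ω]

end Adjacency

lemma tR_zero_of_nonempty {n r : ℕ} {H : RGraph r} (hE : H.E.Nonempty) :
    tR H (0 : Tensor n r) = 0 := by
  obtain ⟨e, he⟩ := hE
  have hprod : ∀ φ : H.V → Fin n, ∏ e ∈ H.E, edgeEval (0 : Tensor n r) φ e = 0 :=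
    fun φ => prod_eq_zero he <| by unfold edgeEval; split <;> rfl
  simp [tR, homR, homE, hprod]

lemma lt_mul_pow_div_descFactorial {p : ℝ} (hp : 0 < p) {n r : ℕ} (hr : 2 ≤ r) (hn : r ≤ n) :
    p < p * (n : ℝ) ^ r / n.descFactorial r := by
  have hlt : (n.descFactorial r : ℝ) < (n : ℝ) ^ r := by
    exact_mod_cast Nat.descFactorial_lt_pow (by omega) hr
  rw [lt_div_iff₀ (by exact_mod_cast Nat.descFactorial_pos.2 hn)]
  exact mul_lt_mul_of_pos_left hlt hp

section Chernoff

/-- The likelihood ratio `(p/q)^k ((1-p)/(1-q))^{N-k}` increases with `k`, and equals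
`exp(-N I_p(q))` at `k = qN`. -/
lemma pow_mul_pow_le_exp_neg_mul_entBer {p q : ℝ} (hq₀ : 0 < q) (hqp : q ≤ p) (hp₁ : p < 1)
    {N k : ℕ} (hkN : k ≤ N) (hkq : (k : ℝ) ≤ q * N) :
    p ^ k * (1 - p) ^ (N - k) ≤
      Real.exp (-(N * entBer p q)) * (q ^ k * (1 - q) ^ (N - k)) := by
  have hp₀ : 0 < p := hq₀.trans_le hqp
  have hp₁' : 0 < 1 - p := by linarith
  have hq₁' : 0 < 1 - q := by linarith
  rw [← Real.log_le_log_iff (by positivity) (by positivity), Real.log_mul (by positivity)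
    (by positivity), Real.log_mul (by positivity) (by positivity), Real.log_mul (by positivity)
    (by positivity), Real.log_exp, Real.log_pow, Real.log_pow, Real.log_pow, Real.log_pow,
    Nat.cast_sub hkN, entBer, Real.log_div hq₀.ne' hp₀.ne', Real.log_div hq₁'.ne' hp₁'.ne']
  have hlog : Real.log q ≤ Real.log p := Real.log_le_log hq₀ hqp
  have hlog₁ : Real.log (1 - p) ≤ Real.log (1 - q) := Real.log_le_log hp₁' (by linarith)
  nlinarith [mul_nonneg (sub_nonneg.2 hkq) (add_nonneg (sub_nonneg.2 hlog) (sub_nonneg.2 hlog₁))]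

variable {n r : ℕ} {p q : ℝ} {E : Set (Tensor n r)}

lemma muP_le_exp_neg_of_edgeCount_le (hq₀ : 0 < q) (hqp : q ≤ p) (hp₁ : p < 1)
    (hE : ∀ ω : EdgeSel n r, adjOf ω ∈ E → (edgeCount ω : ℝ) ≤ q * Fintype.card (Idx n r)) :
    muP n r p E ≤ Real.exp (-(Fintype.card (Idx n r) * entBer p q)) := by
  calc muP n r p E
      ≤ ∑ ω : EdgeSel n r, Real.exp (-(Fintype.card (Idx n r) * entBer p q)) *
          wWeight (fun _ => q) ω := by
        refine sum_le_sum fun ω _ => ?_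
        split_ifs with hω
        · rw [wWeight_const, wWeight_const]
          exact pow_mul_pow_le_exp_neg_mul_entBer hq₀ hqp hp₁
            ((card_filter_le _ _).trans card_univ.le) (hE ω hω)
        · exact mul_nonneg (Real.exp_pos _).le
            (wWeight_const_nonneg hq₀.le (by linarith) ω)
    _ = Real.exp (-(Fintype.card (Idx n r) * entBer p q)) := by
        rw [← mul_sum, sum_wWeight, mul_one]

lemma muP_pos_of_adjOf_mem (hp₀ : 0 < p) (hp₁ : p < 1) {ω : EdgeSel n r} (hω : adjOf ω ∈ E) :
    0 < muP n r p E := by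
  refine sum_pos' (fun ω' _ => ?_) ⟨ω, mem_univ _, ?_⟩
  · split_ifs
    exacts [wWeight_const_nonneg hp₀.le hp₁.le ω', le_rfl]
  · rw [if_pos hω, wWeight_const]
    exact mul_pos (pow_pos hp₀ _) (pow_pos (by linarith) _)

end Chernoff

theorem statement19_general (r : ℕ) (hr : 2 ≤ r) (H : RGraph r)
    (hSid : ∀ n : ℕ, 1 ≤ n → ∀ Q ∈ wtSet n r,
      tR H Q ≥ ((∑ x : Fin r → Fin n, Q x) / (n : ℝ) ^ r) ^ H.E.card)
    (δ : ℝ) (hδ₁ : δ < 1)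
    (n : ℕ) (hn : r ≤ n) (p : ℝ) (hp : 0 < p) (hp1 : p < 1)
    (q : ℝ)
    (hq : q = (1 - δ) ^ ((1 : ℝ) / (H.E.card : ℝ)) * p * (n : ℝ) ^ r /
      (n.descFactorial r : ℝ))
    (hqp : q ≤ p) :
    -Real.log (muP n r p {A | tR H A ≤ (1 - δ) * p ^ H.E.card}) ≥
      (n.choose r : ℝ) * entBer p q := by
  set E : Set (Tensor n r) := {A | tR H A ≤ (1 - δ) * p ^ H.E.card}
  have hn₁ : 1 ≤ n := by omega
  have hδ : 0 < 1 - δ := by linarith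
  have hdesc : (0 : ℝ) < n.descFactorial r := by exact_mod_cast Nat.descFactorial_pos.2 hn
  have hq₀ : 0 < q := by rw [hq]; positivity
  have hE : H.E.Nonempty := nonempty_iff_ne_empty.2 fun hE => hqp.not_gt <| by
    simpa [hq, hE] using lt_mul_pow_div_descFactorial hp hr hn
  have hcount : ∀ ω : EdgeSel n r, adjOf ω ∈ E →
      (edgeCount ω : ℝ) ≤ q * Fintype.card (Idx n r) := by
    intro ω hω
    rw [Fintype.card_finset_len, Fintype.card_fin, hq]
    refine edgeCount_le_of_density_le ω hn
      (le_of_pow_le_pow_left₀ hE.card_pos.ne' (by positivity) ?_)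
    rw [mul_pow, one_div, Real.rpow_inv_natCast_pow hδ.le hE.card_pos.ne']
    exact (hSid n hn₁ _ (adjOf_mem_wtSet ω)).trans hω
  have hempty : adjOf (fun _ => false) ∈ E := by
    change tR H _ ≤ _
    rw [adjOf_false, tR_zero_of_nonempty hE]
    positivity
  have hpos := muP_pos_of_adjOf_mem hp hp1 hempty
  have hlog := Real.log_le_log hpos (muP_le_exp_neg_of_edgeCount_le hq₀ hqp hp1 hcount)
  rw [Real.log_exp, Fintype.card_finset_len, Fintype.card_fin] at hlog
  linarith

theorem statement19 (r : ℕ) (hr : 2 ≤ r) (H : RGraph r)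
    (hSid : ∀ n : ℕ, 1 ≤ n → ∀ Q ∈ wtSet n r,
      tR H Q ≥ ((∑ x : Fin r → Fin n, Q x) / (n : ℝ) ^ r) ^ H.E.card)
    (δ : ℝ) (hδ₀ : 0 < δ) (hδ₁ : δ < 1)
    (n : ℕ) (hn : r ≤ n) (p : ℝ) (hp : 0 < p) (hp1 : p < 1)
    (q : ℝ)
    (hq : q = (1 - δ) ^ ((1 : ℝ) / (H.E.card : ℝ)) * p * (n : ℝ) ^ r /
      (n.descFactorial r : ℝ))
    (hqp : q ≤ p) :
    -Real.log (muP n r p {A | tR H A ≤ (1 - δ) * p ^ H.E.card}) ≥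
      (n.choose r : ℝ) * entBer p q :=
  statement19_general r hr H hSid δ hδ₁ n hn p hp hp1 q hq hqp
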